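/- Let 1 ≤ p ≤ ∞ and let b : (0,∞) → [0,∞] be non-increasing with generalized inverse b⁻¹. Then N_{p,1}(b) = ‖b⁻¹‖_{L^{p'}(0,∞)}, where p' is the conjugate exponent of p (p' = ∞ when p = 1) and the norm is with respect to Lebesgue measure; that is, ‖b⁻¹‖_{L^{p'}} is the least constant C such that ‖H_b f‖_{L^1(0,∞)} ≤ C‖f‖_{L^p(0,∞)} for all nonnegative measurable f on (0,∞). -/

import Mathlib

/-! By Tonelli, `∫₀^∞ H_b f = ∫₀^∞ f · b⁻¹`: for fixed `t`, the set of `x > 0` with `t < b x`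
is an initial interval of `(0, ∞)` (as `b` is non-increasing) of length `b⁻¹ t`. So `N_{p,1}(b)`
is the norm of the functional `f ↦ ∫ f · b⁻¹` on `L^p`, which is `‖b⁻¹‖_{p'}` by Hölder's
inequality and its converse. For the converse one tests against indicators of sets of finite
measure where `b⁻¹` is large (`p = 1`), against `1` (`p = ∞`), and otherwise against `h^{p'-1}`
for the truncations `h` of `b⁻¹`, which have finite `L^{p'}` norm and increase to `b⁻¹`. -/

open MeasureTheory Set Filter Topology
open scoped ENNReal

noncomputable section

/-- The normal form Hardy operator: `H_b f (x) = ∫_0^{b x} f`, where the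
upper endpoint `b x` may be infinite. -/
def hardyOp (b : ℝ → ℝ≥0∞) (f : ℝ → ℝ≥0∞) (x : ℝ) : ℝ≥0∞ :=
  ∫⁻ t in {t : ℝ | 0 < t ∧ ENNReal.ofReal t < b x}, f t

/-- The `L^q` "norm" of an `ℝ≥0∞`-valued function with respect to a measure `ν`. -/
def lqNormGen {α : Type*} [MeasurableSpace α] (ν : Measure α) (q : ℝ≥0∞)
    (g : α → ℝ≥0∞) : ℝ≥0∞ :=
  if q = ∞ then essSup g ν else (∫⁻ x, g x ^ q.toReal ∂ν) ^ (1 / q.toReal)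

/-- The `L^q` norm over `(0,∞)` with respect to Lebesgue measure. -/
def lqNorm (q : ℝ≥0∞) (g : ℝ → ℝ≥0∞) : ℝ≥0∞ :=
  lqNormGen (volume.restrict (Ioi (0 : ℝ))) q g

/-- `N_{p,q}(b)`: the least constant in the normal form Hardy inequality. -/
def Npq (p q : ℝ≥0∞) (b : ℝ → ℝ≥0∞) : ℝ≥0∞ :=
  sInf {C : ℝ≥0∞ | ∀ f : ℝ → ℝ≥0∞, Measurable f →
    lqNorm q (hardyOp b f) ≤ C * lqNorm p f}

/-- The generalized inverse of a non-increasing `b : (0,∞) → [0,∞]`: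
`b⁻¹ y = sup {x > 0 : y < b x}`, with `sup ∅ = 0`. -/
def genInv (b : ℝ → ℝ≥0∞) (y : ℝ) : ℝ≥0∞ :=
  ⨆ (x : ℝ) (_ : 0 < x ∧ ENNReal.ofReal y < b x), ENNReal.ofReal x

/-- The sharp Hardy–Bliss constant `K_{p,q}` for `1 < p ≤ q < ∞`. -/
def Kpq (p q : ℝ) : ℝ :=
  if p = q then p ^ (1/p) * (p / (p - 1)) ^ (1 - 1/p)
  else
    (Real.Gamma (1 / (1/p - 1/q)) /
        (Real.Gamma ((1 / (1/p - 1/q)) / p) *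
          Real.Gamma ((1 / (1/p - 1/q)) / (q / (q - 1))))) ^ (1/p - 1/q)

lemma genInv_antitone (b : ℝ → ℝ≥0∞) : Antitone (genInv b) := fun _ _ h =>
  iSup₂_le fun x hx => le_iSup₂_of_le x ⟨hx.1, (ENNReal.ofReal_le_ofReal h).trans_lt hx.2⟩ le_rfl

lemma antitone_ite_of_antitoneOn_Ioi {b : ℝ → ℝ≥0∞} (hb : AntitoneOn b (Ioi 0)) :
    Antitone fun x => if 0 < x then b x else ∞ := by
  intro x y hxy
  by_cases hx : 0 < x
  · simp only [hx, hx.trans_le hxy, if_true]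
    exact hb hx (hx.trans_le hxy) hxy
  · simp [hx]

lemma Real.volume_eq_iSup_of_Ioc_subset {S : Set ℝ} (hS : S ⊆ Ioi 0)
    (hIoc : ∀ x ∈ S, Ioc 0 x ⊆ S) : volume S = ⨆ x ∈ S, ENNReal.ofReal x := by
  refine le_antisymm ?_ (iSup₂_le fun x hx => ?_)
  · set s := ⨆ x ∈ S, ENNReal.ofReal x
    rcases eq_or_ne s ∞ with hs | hs
    · exact hs ▸ le_top
    calc volume S ≤ volume (Ioc 0 s.toReal) := by
          refine measure_mono fun x hx => ⟨hS hx, ?_⟩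
          exact (ENNReal.ofReal_le_iff_le_toReal hs).mp
            (le_iSup₂ (f := fun x _ => ENNReal.ofReal x) x hx)
      _ = s := by rw [Real.volume_Ioc, sub_zero, ENNReal.ofReal_toReal hs]
  · simpa using measure_mono (μ := volume) (hIoc x hx)

lemma volume_setOf_lt_eq_genInv {b : ℝ → ℝ≥0∞} (hb : AntitoneOn b (Ioi 0)) (t : ℝ) :
    volume {x : ℝ | 0 < x ∧ ENNReal.ofReal t < b x} = genInv b t :=
  Real.volume_eq_iSup_of_Ioc_subset (fun _ hx => hx.1)
    fun _ hx _ hy => ⟨hy.1, hx.2.trans_le (hb hy.1 hx.1 hy.2)⟩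

theorem setLIntegral_hardyOp {b f : ℝ → ℝ≥0∞} (hb : AntitoneOn b (Ioi 0)) (hf : Measurable f) :
    ∫⁻ x in Ioi 0, hardyOp b f x = ∫⁻ t in Ioi 0, f t * genInv b t := by
  set b' : ℝ → ℝ≥0∞ := fun x => if 0 < x then b x else ∞
  have hb' : Measurable b' := (antitone_ite_of_antitoneOn_Ioi hb).measurable
  set E : Set (ℝ × ℝ) := {z | ENNReal.ofReal z.2 < b' z.1}
  have hE : MeasurableSet E :=
    measurableSet_lt (ENNReal.measurable_ofReal.comp measurable_snd) (hb'.comp measurable_fst)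
  calc ∫⁻ x in Ioi 0, hardyOp b f x
      = ∫⁻ x in Ioi 0, ∫⁻ t in Ioi 0, E.indicator (fun z => f z.2) (x, t) := by
        refine setLIntegral_congr_fun measurableSet_Ioi fun x hx => ?_
        change _ = ∫⁻ t in Ioi 0, {t | ENNReal.ofReal t < b' x}.indicator f t
        rw [setLIntegral_indicator (measurableSet_lt ENNReal.measurable_ofReal measurable_const),
          show b' x = b x from if_pos hx, inter_comm]
        rfl
    _ = ∫⁻ t in Ioi 0, ∫⁻ x in Ioi 0, E.indicator (fun z => f z.2) (x, t) :=
        lintegral_lintegral_swap ((hf.comp measurable_snd).indicator hE).aemeasurable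
    _ = ∫⁻ t in Ioi 0, f t * genInv b t := by
        refine lintegral_congr fun t => ?_
        have hsec : {x | ENNReal.ofReal t < b' x} ∩ Ioi 0 =
            {x | 0 < x ∧ ENNReal.ofReal t < b x} := by
          ext x
          by_cases hx : 0 < x <;> simp [b', hx]
        change ∫⁻ x in Ioi 0, {x | ENNReal.ofReal t < b' x}.indicator (fun _ => f t) x = _
        rw [lintegral_indicator_const (measurableSet_lt measurable_const hb'),
          Measure.restrict_apply (measurableSet_lt measurable_const hb'), hsec,
          volume_setOf_lt_eq_genInv hb]

section Duality

variable {α : Type*} [MeasurableSpace α] {μ : Measure α}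

lemma lqNormGen_one (g : α → ℝ≥0∞) : lqNormGen μ 1 g = ∫⁻ x, g x ∂μ := by
  simp [lqNormGen]

lemma lqNormGen_top (g : α → ℝ≥0∞) : lqNormGen μ ∞ g = essSup g μ := if_pos rfl

lemma lqNormGen_of_ne_top {q : ℝ≥0∞} (hq : q ≠ ∞) (g : α → ℝ≥0∞) :
    lqNormGen μ q g = (∫⁻ x, g x ^ q.toReal ∂μ) ^ (1 / q.toReal) := if_neg hq

lemma lintegral_mul_le_essSup_mul_lintegral (f : α → ℝ≥0∞) {g : α → ℝ≥0∞}
    (hg : AEMeasurable g μ) : ∫⁻ x, f x * g x ∂μ ≤ essSup f μ * ∫⁻ x, g x ∂μ := by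
  rw [← lintegral_const_mul'' _ hg]
  exact lintegral_mono_ae ((ae_le_essSup (f := f)).mono fun x hx => by gcongr)

theorem lintegral_mul_le_lqNormGen_mul_lqNormGen {p q : ℝ≥0∞} [p.HolderConjugate q]
    {f g : α → ℝ≥0∞} (hf : AEMeasurable f μ) (hg : AEMeasurable g μ) :
    ∫⁻ x, f x * g x ∂μ ≤ lqNormGen μ p f * lqNormGen μ q g := by
  rcases eq_or_ne p ∞ with rfl | hp
  · obtain rfl : q = 1 := (ENNReal.HolderConjugate.eq_top_iff_eq_one ∞ q).mp rfl
    rw [lqNormGen_top, lqNormGen_one]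
    exact lintegral_mul_le_essSup_mul_lintegral f hg
  rcases eq_or_ne q ∞ with rfl | hq
  · obtain rfl : p = 1 := (ENNReal.HolderConjugate.eq_top_iff_eq_one ∞ p).mp rfl
    rw [lqNormGen_top, lqNormGen_one, mul_comm]
    simpa only [mul_comm (f _)] using lintegral_mul_le_essSup_mul_lintegral g hf
  rw [lqNormGen_of_ne_top hp, lqNormGen_of_ne_top hq]
  exact ENNReal.lintegral_mul_le_Lp_mul_Lq μ (ENNReal.HolderConjugate.toReal_of_ne_top hp hq) hf hg

lemma essSup_le_of_forall_setLIntegral_le [SigmaFinite μ] {g : α → ℝ≥0∞} (hg : Measurable g)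
    {C : ℝ≥0∞} (hC : ∀ s, MeasurableSet s → μ s ≠ ∞ → ∫⁻ x in s, g x ∂μ ≤ C * μ s) :
    essSup g μ ≤ C := by
  by_contra! hlt
  obtain ⟨c, hCc, hcg⟩ := exists_between hlt
  have hpos : 0 < μ {x | c < g x} := by
    refine pos_iff_ne_zero.mpr fun h0 => hcg.not_ge (essSup_le_of_ae_le c ?_)
    exact measure_eq_zero_iff_ae_notMem.mp h0 |>.mono fun x hx => not_lt.mp hx
  obtain ⟨s, hs, hsg, h0s, hs_top⟩ :=
    Measure.exists_subset_measure_lt_top (measurableSet_lt measurable_const hg) hpos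
  have : c * μ s ≤ C * μ s :=
    calc c * μ s = ∫⁻ _ in s, c ∂μ := (setLIntegral_const s c).symm
      _ ≤ ∫⁻ x in s, g x ∂μ := setLIntegral_mono hg fun x hx => (hsg hx).le
      _ ≤ C * μ s := hC s hs hs_top.ne
  exact hCc.not_ge ((ENNReal.mul_le_mul_iff_left h0s.ne' hs_top.ne).mp this)

lemma ENNReal.le_rpow_of_le_mul_rpow {a C : ℝ≥0∞} {r s : ℝ} (hrs : r.HolderConjugate s)
    (ha : a ≠ ∞) (h : a ≤ C * a ^ (1 / r)) : a ≤ C ^ s := by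
  rcases eq_or_ne a 0 with rfl | ha₀
  · exact zero_le
  have hpos : a ^ (1 / r) ≠ 0 := (ENNReal.rpow_pos (pos_iff_ne_zero.mpr ha₀) ha).ne'
  have hfin : a ^ (1 / r) ≠ ∞ := ENNReal.rpow_ne_top_of_nonneg hrs.one_div_nonneg ha
  have hsplit : a = a ^ s⁻¹ * a ^ (1 / r) := by
    rw [← ENNReal.rpow_add _ _ ha₀ ha, one_div, add_comm, hrs.inv_add_inv_eq_one, ENNReal.rpow_one]
  rw [← ENNReal.rpow_inv_le_iff hrs.symm.pos, ← ENNReal.mul_le_mul_iff_left hpos hfin, ← hsplit]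
  exact h

def spanningTrunc (μ : Measure α) [SigmaFinite μ] (g : α → ℝ≥0∞) (n : ℕ) : α → ℝ≥0∞ :=
  (spanningSets μ n).indicator fun x => min (g x) n

section SpanningTrunc

variable [SigmaFinite μ] {g : α → ℝ≥0∞}

lemma measurable_spanningTrunc (hg : Measurable g) (n : ℕ) : Measurable (spanningTrunc μ g n) :=
  (hg.min measurable_const).indicator (measurableSet_spanningSets μ n)

lemma spanningTrunc_le (g : α → ℝ≥0∞) (n : ℕ) : spanningTrunc μ g n ≤ g := fun x =>
  (indicator_le_self' (fun _ _ => zero_le) x).trans (min_le_left _ _)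

lemma monotone_spanningTrunc (g : α → ℝ≥0∞) : Monotone (spanningTrunc μ g) := fun m n hmn x =>
  calc spanningTrunc μ g m x ≤ (spanningSets μ n).indicator (fun x => min (g x) m) x :=
        indicator_le_indicator_of_subset (monotone_spanningSets μ hmn) (fun _ => zero_le) x
    _ ≤ spanningTrunc μ g n x := indicator_le_indicator (by gcongr)

lemma iSup_spanningTrunc (g : α → ℝ≥0∞) (x : α) : ⨆ n, spanningTrunc μ g n x = g x := by
  refine le_antisymm (iSup_le fun n => spanningTrunc_le g n x) ?_
  have hx := mem_spanningSetsIndex μ x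
  calc g x = ⨆ m : ℕ, min (g x) m := by rw [← inf_iSup_eq, ENNReal.iSup_natCast, inf_top_eq]
    _ ≤ ⨆ n, spanningTrunc μ g n x := iSup_le fun m =>
      le_iSup_of_le (max m (spanningSetsIndex μ x)) <| by
        rw [spanningTrunc, indicator_of_mem (monotone_spanningSets μ (le_max_right _ _) hx)]
        gcongr
        exact_mod_cast le_max_left _ _

lemma lintegral_spanningTrunc_rpow_ne_top (g : α → ℝ≥0∞) (n : ℕ) {r : ℝ} (hr : 0 < r) :
    ∫⁻ x, spanningTrunc μ g n x ^ r ∂μ ≠ ∞ := by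
  refine ne_top_of_le_ne_top ?_
    (lintegral_mono (g := (spanningSets μ n).indicator fun _ => (n : ℝ≥0∞) ^ r) fun x => ?_)
  · rw [lintegral_indicator_const (measurableSet_spanningSets μ n)]
    exact ENNReal.mul_ne_top (by simp [hr.le]) (measure_spanningSets_lt_top μ n).ne
  · by_cases hx : x ∈ spanningSets μ n
    · simp only [spanningTrunc, indicator_of_mem hx]
      gcongr
      exact min_le_right _ _
    · simp [spanningTrunc, indicator_of_notMem hx, hr]

end SpanningTrunc

lemma lintegral_rpow_le_of_forall_lintegral_mul_le {p q : ℝ≥0∞} [p.HolderConjugate q]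
    (hp : p ≠ ∞) (hq : q ≠ ∞) {g h : α → ℝ≥0∞} (hh : Measurable h) (hhg : h ≤ g)
    (hfin : ∫⁻ x, h x ^ q.toReal ∂μ ≠ ∞) {C : ℝ≥0∞}
    (hC : ∀ f, Measurable f → ∫⁻ x, f x * g x ∂μ ≤ C * lqNormGen μ p f) :
    ∫⁻ x, h x ^ q.toReal ∂μ ≤ C ^ q.toReal := by
  have hpq := ENNReal.HolderConjugate.toReal_of_ne_top hp hq
  set r := q.toReal
  refine ENNReal.le_rpow_of_le_mul_rpow hpq hfin ?_
  -- testing against `h ^ (r - 1)`, whose `p`-th power is `h ^ r`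
  calc ∫⁻ x, h x ^ r ∂μ = ∫⁻ x, h x ^ (r - 1) * h x ∂μ := lintegral_congr fun x => by
        conv_lhs => rw [← sub_add_cancel r 1]
        rw [ENNReal.rpow_add_of_nonneg _ _ hpq.symm.sub_one_pos.le zero_le_one, ENNReal.rpow_one]
    _ ≤ ∫⁻ x, h x ^ (r - 1) * g x ∂μ := lintegral_mono fun x => by gcongr; exact hhg x
    _ ≤ C * lqNormGen μ p (fun x => h x ^ (r - 1)) := hC _ (hh.pow_const _)
    _ = C * (∫⁻ x, h x ^ r ∂μ) ^ (1 / p.toReal) := by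
        simp_rw [lqNormGen_of_ne_top hp, ← ENNReal.rpow_mul, hpq.symm.sub_one_mul_conj]

theorem lqNormGen_le_of_forall_lintegral_mul_le [SigmaFinite μ] {p q : ℝ≥0∞}
    [p.HolderConjugate q] {g : α → ℝ≥0∞} (hg : Measurable g) {C : ℝ≥0∞}
    (hC : ∀ f, Measurable f → ∫⁻ x, f x * g x ∂μ ≤ C * lqNormGen μ p f) :
    lqNormGen μ q g ≤ C := by
  rcases eq_or_ne p ∞ with rfl | hp
  · obtain rfl : q = 1 := (ENNReal.HolderConjugate.eq_top_iff_eq_one ∞ q).mp rfl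
    calc lqNormGen μ 1 g = ∫⁻ x, (1 : α → ℝ≥0∞) x * g x ∂μ := by simp [lqNormGen_one]
      _ ≤ C * lqNormGen μ ∞ 1 := hC 1 measurable_const
      _ ≤ C := by
        rw [lqNormGen_top]
        exact mul_le_of_le_one_right' (essSup_le_of_ae_le 1 (.of_forall fun _ => le_rfl))
  rcases eq_or_ne q ∞ with rfl | hq
  · obtain rfl : p = 1 := (ENNReal.HolderConjugate.eq_top_iff_eq_one ∞ p).mp rfl
    rw [lqNormGen_top]
    refine essSup_le_of_forall_setLIntegral_le hg fun s hs _ => ?_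
    have h := hC (s.indicator 1) (measurable_one.indicator hs)
    simp only [← indicator_mul_left, Pi.one_apply, one_mul, lintegral_indicator hs, lqNormGen_one,
      setLIntegral_one] at h
    exact h
  have hr : 0 < q.toReal := ENNReal.toReal_pos (ENNReal.HolderConjugate.ne_zero q p) hq
  have hrpow_iSup : ∀ x, g x ^ q.toReal = ⨆ n, spanningTrunc μ g n x ^ q.toReal := fun x => by
    rw [← iSup_spanningTrunc (μ := μ) g x]
    exact Monotone.map_iSup_of_continuousAt ENNReal.continuous_rpow_const.continuousAt
      (ENNReal.monotone_rpow_of_nonneg hr.le) (ENNReal.zero_rpow_of_pos hr)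
  have hint : ∫⁻ x, g x ^ q.toReal ∂μ ≤ C ^ q.toReal := calc
    ∫⁻ x, g x ^ q.toReal ∂μ = ⨆ n, ∫⁻ x, spanningTrunc μ g n x ^ q.toReal ∂μ := by
        simp_rw [hrpow_iSup]
        exact lintegral_iSup (fun n => (measurable_spanningTrunc hg n).pow_const _)
          fun m n hmn x => by gcongr; exact monotone_spanningTrunc g hmn x
    _ ≤ C ^ q.toReal := iSup_le fun n =>
        lintegral_rpow_le_of_forall_lintegral_mul_le hp hq (measurable_spanningTrunc hg n)
          (spanningTrunc_le g n) (lintegral_spanningTrunc_rpow_ne_top g n hr) hC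
  rwa [lqNormGen_of_ne_top hq, one_div, ENNReal.rpow_inv_le_iff hr]

end Duality

theorem Npq_into_L1_general (p p' : ℝ≥0∞) (hp' : 1/p + 1/p' = 1)
    (b : ℝ → ℝ≥0∞) (hb : AntitoneOn b (Ioi 0)) :
    Npq p 1 b = lqNorm p' (genInv b) ∧
    ∀ f : ℝ → ℝ≥0∞, Measurable f →
      lqNorm 1 (hardyOp b f) ≤ lqNorm p' (genInv b) * lqNorm p f := by
  have : p.HolderConjugate p' :=
    ENNReal.holderConjugate_iff.mpr (by simpa only [one_div] using hp')
  have hreduce : ∀ f, Measurable f →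
      lqNorm 1 (hardyOp b f) = ∫⁻ t in Ioi 0, f t * genInv b t := fun f hf => by
    rw [lqNorm, lqNormGen_one, setLIntegral_hardyOp hb hf]
  have hardy : ∀ f : ℝ → ℝ≥0∞, Measurable f →
      lqNorm 1 (hardyOp b f) ≤ lqNorm p' (genInv b) * lqNorm p f := fun f hf => by
    rw [hreduce f hf, mul_comm]
    exact lintegral_mul_le_lqNormGen_mul_lqNormGen hf.aemeasurable
      (genInv_antitone b).measurable.aemeasurable
  refine ⟨le_antisymm (sInf_le hardy) (le_sInf fun C hC => ?_), hardy⟩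
  exact lqNormGen_le_of_forall_lintegral_mul_le (genInv_antitone b).measurable
    fun f hf => hreduce f hf ▸ hC f hf

/-- `N_{p,1}(b) = ‖b⁻¹‖_{p'}`, and this value is the least
constant in the corresponding Hardy inequality. -/
theorem Npq_into_L1 (p p' : ℝ≥0∞) (hp : 1 ≤ p) (hp' : 1/p + 1/p' = 1)
    (b : ℝ → ℝ≥0∞) (hb : AntitoneOn b (Ioi 0)) :
    Npq p 1 b = lqNorm p' (genInv b) ∧
    ∀ f : ℝ → ℝ≥0∞, Measurable f →
      lqNorm 1 (hardyOp b f) ≤ lqNorm p' (genInv b) * lqNorm p f :=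
  Npq_into_L1_general p p' hp' b hb
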